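/- arXiv:1708.02610 — 2 statements merged into one kernel-verified Lean document; each statement's English description precedes it below -/
import Mathlib

section
/- Let Y be a random variable taking values in a finite non-empty set 𝒴, and let U be a uniform random variable on 𝒴. Then for any subset E of 𝒴 with P(U ∈ E) < 1, one has P(Y ∈ E) ≤ (H(U) − H(Y) + log 2) / log(1 / P(U ∈ E)), where H denotes Shannon entropy. -/
open Finset

/-- Shannon entropy of a probability mass function on a finite type,
with the convention `0 * log (1/0) = 0`. -/
noncomputable def shannonEntropy {Y : Type*} [Fintype Y] (p : Y → ℝ) : ℝ :=
  ∑ y, p y * Real.log (1 / p y)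

/-! Write `P` for the mass of `E` under `p`, `k = #E` and `N = card Y`. Gibbs' inequality against
the sub-probability weights `1 / (2k)` on `E` and `1 / (2N)` off `E` gives
`H(p) ≤ log 2 + P log k + (1 - P) log N`, which rearranges to
`P (log N - log k) ≤ log N - H(p) + log 2`, and `log N = H(U)`. -/

namespace Real

lemma mul_log_one_div_sub_mul_log_one_div_le {p m : ℝ} (hp : 0 ≤ p) (hm : 0 < m) :
    p * log (1 / p) - p * log (1 / m) ≤ m - p := by
  rcases hp.eq_or_lt with rfl | hp
  · simpa using hm.le
  calc p * log (1 / p) - p * log (1 / m) = p * log (m / p) := by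
        rw [log_div hm.ne' hp.ne', one_div, one_div, log_inv, log_inv]; ring
    _ ≤ p * (m / p - 1) := by gcongr; exact log_le_sub_one_of_pos (div_pos hm hp)
    _ = m - p := by field_simp

end Real

open Real

section

variable {Y : Type*} [Fintype Y]

theorem shannonEntropy_le_sum_mul_log_one_div {p m : Y → ℝ} (hp : ∀ y, 0 ≤ p y)
    (hm : ∀ y, 0 < m y) (hmp : ∑ y, m y ≤ ∑ y, p y) :
    shannonEntropy p ≤ ∑ y, p y * log (1 / m y) := by
  have := sum_le_sum fun y (_ : y ∈ univ) =>
    mul_log_one_div_sub_mul_log_one_div_le (hp y) (hm y)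
  rw [sum_sub_distrib, sum_sub_distrib] at this
  unfold shannonEntropy
  linarith

theorem shannonEntropy_const_one_div_card :
    shannonEntropy (fun _ : Y => 1 / (Fintype.card Y : ℝ)) = log (Fintype.card Y) := by
  rcases (Fintype.card Y).eq_zero_or_pos with h | h
  · simp [shannonEntropy, h]
  · simp [shannonEntropy, card_univ]
    field_simp

theorem shannonEntropy_le_log_two_add_sum_mul_log_card {p : Y → ℝ} (hp : ∀ y, 0 ≤ p y)
    (hsum : ∑ y, p y = 1) {E : Finset Y} (hE : E.Nonempty) :
    shannonEntropy p ≤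
      log 2 + (∑ y ∈ E, p y) * log #E + (1 - ∑ y ∈ E, p y) * log (Fintype.card Y) := by
  classical
  set w : Y → ℝ := fun y => if y ∈ E then (#E : ℝ) else Fintype.card Y
  have hk : (0 : ℝ) < #E := by exact_mod_cast hE.card_pos
  have hN : (0 : ℝ) < Fintype.card Y := by exact_mod_cast hE.card_pos.trans_le (card_le_univ E)
  have hw : ∀ y, 0 < w y := fun y => by unfold w; split_ifs <;> assumption
  have hsplit (f : Y → ℝ → ℝ) :
      ∑ y, f y (w y) = ∑ y ∈ E, f y #E + ∑ y ∈ Eᶜ, f y (Fintype.card Y) := by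
    rw [← sum_add_sum_compl E]
    congr 1 <;> refine sum_congr rfl fun y hy => ?_
    · simp only [w, if_pos hy]
    · simp only [w, if_neg (mem_compl.mp hy)]
  have hwsum : ∑ y, (2 * w y)⁻¹ ≤ ∑ y, p y := by
    have : (#Eᶜ : ℝ) ≤ Fintype.card Y := by exact_mod_cast card_le_univ Eᶜ
    calc ∑ y, (2 * w y)⁻¹
        = #E * (2 * (#E : ℝ))⁻¹ + #Eᶜ * (2 * (Fintype.card Y : ℝ))⁻¹ := by
          rw [hsplit fun _ x => (2 * x)⁻¹, sum_const, sum_const, nsmul_eq_mul, nsmul_eq_mul]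
      _ ≤ #E * (2 * (#E : ℝ))⁻¹ + Fintype.card Y * (2 * (Fintype.card Y : ℝ))⁻¹ := by gcongr
      _ = ∑ y, p y := by rw [hsum]; field_simp; ring
  have hPc : ∑ y ∈ Eᶜ, p y = 1 - ∑ y ∈ E, p y := by linarith [sum_add_sum_compl E p]
  calc shannonEntropy p ≤ ∑ y, p y * log (1 / (2 * w y)⁻¹) :=
        shannonEntropy_le_sum_mul_log_one_div hp (fun y => by have := hw y; positivity) hwsum
    _ = ∑ y, p y * log 2 + ∑ y, p y * log (w y) := by
        rw [← sum_add_distrib]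
        refine sum_congr rfl fun y _ => ?_
        rw [one_div, inv_inv, log_mul two_ne_zero (hw y).ne', mul_add]
    _ = _ := by
        rw [← sum_mul, hsum, hsplit fun y x => p y * log x, ← sum_mul, ← sum_mul, hPc]
        ring

end

theorem stmt0_general {Y : Type*} [Fintype Y]
    (p : Y → ℝ) (hp : ∀ y, 0 ≤ p y) (hsum : ∑ y, p y = 1)
    (E : Finset Y)
    (hE : (E.card : ℝ) / (Fintype.card Y : ℝ) < 1) :
    ∑ y ∈ E, p y ≤
      (shannonEntropy (fun _ : Y => (1 : ℝ) / (Fintype.card Y : ℝ)) - shannonEntropy p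
          + Real.log 2)
        / Real.log (1 / ((E.card : ℝ) / (Fintype.card Y : ℝ))) := by
  rcases E.eq_empty_or_nonempty with rfl | hne
  · -- the right side is junk: `log (1 / (0 / N)) = 0` and `x / 0 = 0`
    simp
  have hk : (0 : ℝ) < #E := by exact_mod_cast hne.card_pos
  have hN : (0 : ℝ) < Fintype.card Y := by exact_mod_cast hne.card_pos.trans_le (card_le_univ E)
  have hkN : (#E : ℝ) < Fintype.card Y := (div_lt_one hN).mp hE
  rw [shannonEntropy_const_one_div_card, one_div_div, log_div hN.ne' hk.ne',
    le_div_iff₀ (sub_pos.mpr (log_lt_log hk hkN))]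
  linarith [shannonEntropy_le_log_two_add_sum_mul_log_card hp hsum hne]

theorem stmt0 {Y : Type*} [Fintype Y] [Nonempty Y]
    (p : Y → ℝ) (hp : ∀ y, 0 ≤ p y) (hsum : ∑ y, p y = 1)
    (E : Finset Y)
    (hE : (E.card : ℝ) / (Fintype.card Y : ℝ) < 1) :
    ∑ y ∈ E, p y ≤
      (shannonEntropy (fun _ : Y => (1 : ℝ) / (Fintype.card Y : ℝ)) - shannonEntropy p
          + Real.log 2)
        / Real.log (1 / ((E.card : ℝ) / (Fintype.card Y : ℝ))) :=
  stmt0_general p hp hsum E hE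
end

section
/- Suppose f: ℤ → 𝔻 is a bounded function such that for every ε > 0 there exists a periodic function f_ε: ℤ → ℂ with sup_a |f(a) − f_ε(a)| ≤ ε, and suppose that for every Dirichlet character χ mod any modulus one has lim_{x→∞} (1/x) Σ_{n≤x} f(an) conj(χ(n)) = 0 for all positive integers a. Then f(a) = 0 for all a. -/
/-!
Averaging the hypothesis over all characters mod `q` isolates the progression `n ≡ 1 (mod q)`
(orthogonality of characters), so the averages of `f (b n)` over that progression tend to `0`.
If `g` is a `q`-periodic `ε`-approximation of `f`, then `f (b n)` stays within `ε` of `g b` on this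
progression, which has density `1 / q`; hence `‖g b‖ ≤ ε`. Every residue class mod `q` contains
a positive `b`, so `‖f a‖ ≤ ‖f a - g a‖ + ‖g b‖ ≤ 2 ε` for every integer `a`.
-/

open Filter Finset Function Topology ComplexConjugate

section Orthogonality

variable {q : ℕ} [NeZero q]

lemma sum_filter_natCast_eq_one_eq_sum_characters (s : Finset ℕ) (g : ℕ → ℂ) :
    ∑ n ∈ s with ((n : ℕ) : ZMod q) = 1, g n =
      (q.totient : ℂ)⁻¹ * ∑ χ : DirichletCharacter ℂ q, ∑ n ∈ s, g n * conj (χ n) := by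
  have htot : (q.totient : ℂ) ≠ 0 := by exact_mod_cast (Nat.totient_pos.2 (NeZero.pos q)).ne'
  rw [Finset.sum_comm, Finset.mul_sum, Finset.sum_filter]
  refine Finset.sum_congr rfl fun n _ => ?_
  rw [← Finset.mul_sum, ← map_sum, DirichletCharacter.sum_characters_eq]
  split_ifs
  · rw [map_natCast]
    field_simp
  · simp

lemma tendsto_average_filter_natCast_eq_one_of_forall_character (g : ℕ → ℂ)
    (h : ∀ χ : DirichletCharacter ℂ q,
      Tendsto (fun x : ℕ => (1 / (x : ℂ)) * ∑ n ∈ Icc 1 x, g n * conj (χ n)) atTop (𝓝 0)) :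
    Tendsto (fun x : ℕ => (1 / (x : ℂ)) * ∑ n ∈ Icc 1 x with ((n : ℕ) : ZMod q) = 1, g n)
      atTop (𝓝 0) := by
  simpa [sum_filter_natCast_eq_one_eq_sum_characters, Finset.mul_sum, mul_left_comm]
    using (tendsto_finsetSum univ fun χ _ => h χ).const_mul (q.totient : ℂ)⁻¹

end Orthogonality

lemma le_card_Icc_filter_natCast_eq_one {q : ℕ} (hq : q ≠ 0) (N : ℕ) :
    N ≤ #{n ∈ Icc 1 (N * q) | ((n : ℕ) : ZMod q) = 1} := by
  have hinj : Injective (fun k : ℕ => k * q + 1) :=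
    (add_left_injective 1).comp (mul_left_injective₀ hq)
  calc N = #((range N).image fun k => k * q + 1) := by
        rw [card_image_of_injective _ hinj, card_range]
    _ ≤ _ := by
      refine card_le_card fun n hn => ?_
      obtain ⟨k, hk, rfl⟩ := mem_image.1 hn
      simp only [mem_filter, mem_Icc, Nat.cast_add, Nat.cast_mul, ZMod.natCast_self, mul_zero,
        zero_add, Nat.cast_one, and_true]
      have : (k + 1) * q ≤ N * q := Nat.mul_le_mul_right q (mem_range.1 hk)
      rw [add_one_mul] at this
      omega

lemma Function.Periodic.apply_mul_of_natCast_eq_one {α : Type*} {g : ℤ → α} {q : ℕ}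
    (hg : Periodic g q) (a : ℤ) {n : ℕ} (hn : (n : ZMod q) = 1) : g (a * n) = g a := by
  obtain ⟨k, hk⟩ := (ZMod.intCast_eq_intCast_iff_dvd_sub 1 n q).1 (by exact_mod_cast hn.symm)
  rw [show a * n = a + a * k * q by linear_combination a * hk]
  exact hg.int_mul (a * k) a

lemma card_mul_sub_le_norm_sum {ι E : Type*} [NormedAddCommGroup E] [NormedSpace ℝ E]
    {s : Finset ι} {u : ι → E} {c : E} {ε : ℝ} (h : ∀ i ∈ s, ‖u i - c‖ ≤ ε) :
    #s * (‖c‖ - ε) ≤ ‖∑ i ∈ s, u i‖ := by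
  have hdev : ‖∑ i ∈ s, (u i - c)‖ ≤ #s * ε := by
    simpa using norm_sum_le_of_le s h
  have := norm_le_norm_add_norm_sub' (#s • c) (∑ i ∈ s, u i)
  rw [RCLike.norm_nsmul ℝ, nsmul_eq_mul, ← sum_const, norm_sub_rev, ← sum_sub_distrib] at this
  linarith

lemma norm_le_of_tendsto_average_filter_natCast_eq_one {f g : ℤ → ℂ} {q : ℕ} (hq : q ≠ 0)
    (hg : Periodic g q) {ε : ℝ} (hfg : ∀ n, ‖f n - g n‖ ≤ ε) (a : ℤ)
    (h : Tendsto (fun x : ℕ => (1 / (x : ℂ)) *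
      ∑ n ∈ Icc 1 x with ((n : ℕ) : ZMod q) = 1, f (a * n)) atTop (𝓝 0)) :
    ‖g a‖ ≤ ε := by
  by_contra! hlt
  have hδ : 0 < (‖g a‖ - ε) / q := div_pos (sub_pos.2 hlt) (by positivity)
  have hmul : Tendsto (fun N : ℕ => N * q) atTop atTop :=
    tendsto_atTop_mono (fun N => Nat.le_mul_of_pos_right N (Nat.pos_of_ne_zero hq)) tendsto_id
  have hlim := (h.comp hmul).norm
  rw [norm_zero] at hlim
  refine hδ.not_ge (ge_of_tendsto hlim ?_)
  filter_upwards [eventually_ge_atTop 1] with N hN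
  set P := {n ∈ Icc 1 (N * q) | ((n : ℕ) : ZMod q) = 1}
  have hclose : ∀ n ∈ P, ‖f (a * n) - g a‖ ≤ ε := fun n hn =>
    hg.apply_mul_of_natCast_eq_one a (mem_filter.1 hn).2 ▸ hfg _
  have hN₀ : (0 : ℝ) < N := by exact_mod_cast hN
  have hq₀ : (0 : ℝ) < q := by exact_mod_cast Nat.pos_of_ne_zero hq
  simp only [comp_apply, norm_mul, norm_div, norm_one, Complex.norm_natCast, Nat.cast_mul]
  calc (‖g a‖ - ε) / q = N * (‖g a‖ - ε) / (N * q) := by field_simp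
    _ ≤ #P * (‖g a‖ - ε) / (N * q) := by
      gcongr
      exact_mod_cast le_card_Icc_filter_natCast_eq_one hq N
    _ ≤ ‖∑ n ∈ P, f (a * n)‖ / (N * q) := by gcongr; exact card_mul_sub_le_norm_sum hclose
    _ = 1 / (N * q) * ‖∑ n ∈ P, f (a * n)‖ := by ring

lemma Function.Periodic.exists_pos_natCast_eq {α : Type*} {g : ℤ → α} {q : ℕ}
    (hg : Periodic g q) (hq : 0 < q) (a : ℤ) : ∃ n : ℕ, 0 < n ∧ g n = g a := by
  obtain ⟨y, ⟨hy₀, -⟩, hya⟩ := hg.exists_mem_Ico₀ (by exact_mod_cast hq) a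
  lift y to ℕ using hy₀
  exact ⟨y + q, by omega, by rw [hya, Nat.cast_add, hg]⟩

theorem stmt11_general (f : ℤ → ℂ)
    (happrox : ∀ ε > (0 : ℝ), ∃ (q : ℕ) (fε : ℤ → ℂ), 0 < q ∧
      (∀ a : ℤ, fε (a + q) = fε a) ∧ ∀ a : ℤ, ‖f a - fε a‖ ≤ ε)
    (horth : ∀ (q : ℕ), 0 < q → ∀ χ : DirichletCharacter ℂ q, ∀ a : ℕ, 0 < a →
      Filter.Tendsto
        (fun x : ℕ => (1 / (x : ℂ)) * ∑ n ∈ Finset.Icc 1 x,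
          f ((a : ℤ) * n) * (starRingEnd ℂ) (χ ((n : ℕ) : ZMod q)))
        Filter.atTop (nhds 0)) :
    ∀ a : ℤ, f a = 0 := by
  intro a
  refine eq_of_forall_dist_le fun ε hε => ?_
  obtain ⟨q, g, hq, hg, hfg⟩ := happrox (ε / 2) (half_pos hε)
  have : NeZero q := ⟨hq.ne'⟩
  obtain ⟨b, hb, hgb⟩ := Periodic.exists_pos_natCast_eq hg hq a
  have hprog := tendsto_average_filter_natCast_eq_one_of_forall_character
    (fun n : ℕ => f (b * n)) fun χ => horth q hq χ b hb
  calc dist (f a) 0 = ‖f a‖ := dist_zero_right _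
    _ ≤ ‖g a‖ + ‖f a - g a‖ := norm_le_norm_add_norm_sub' _ _
    _ ≤ ε / 2 + ε / 2 :=
      add_le_add (hgb ▸ norm_le_of_tendsto_average_filter_natCast_eq_one hq.ne' hg hfg b hprog)
        (hfg a)
    _ = ε := add_halves ε

theorem stmt11 (f : ℤ → ℂ) (hbd : ∀ a : ℤ, ‖f a‖ ≤ 1)
    (happrox : ∀ ε > (0 : ℝ), ∃ (q : ℕ) (fε : ℤ → ℂ), 0 < q ∧
      (∀ a : ℤ, fε (a + q) = fε a) ∧ ∀ a : ℤ, ‖f a - fε a‖ ≤ ε)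
    (horth : ∀ (q : ℕ), 0 < q → ∀ χ : DirichletCharacter ℂ q, ∀ a : ℕ, 0 < a →
      Filter.Tendsto
        (fun x : ℕ => (1 / (x : ℂ)) * ∑ n ∈ Finset.Icc 1 x,
          f ((a : ℤ) * n) * (starRingEnd ℂ) (χ ((n : ℕ) : ZMod q)))
        Filter.atTop (nhds 0)) :
    ∀ a : ℤ, f a = 0 :=
  stmt11_general f happrox horth
end
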